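/- arXiv:2410.20162 — 3 statements merged into one kernel-verified Lean document; each statement's English description precedes it below -/
import Mathlib

section
/- Degree bound for partial sum polynomials: Let q be a prime power, let P₁,…,P_m ∈ F_q[X₁,…,X_n] have degree at most d (and individual variable degrees at most q-1 in the indicator polynomial), let F := ∏_{i=1}^m (1 - P_i^{q-1}), and for β ∈ {0,…,n} define Z_β(Y₁,…,Y_{n-β}) := ∑_{z ∈ F_q^β} F(Y₁,…,Y_{n-β}, z). Then deg(Z_β) ≤ (min(md, n) - β)(q-1). -/
open MvPolynomial

/-- Reduced exponent: maps `e` to a representative in `{0} ∪ {1,…,q-1}` with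
`x ^ e = x ^ redExp q e` for all `x` in a field with `q` elements. -/
def redExp (q e : ℕ) : ℕ := if e = 0 then 0 else (e - 1) % (q - 1) + 1

lemma redExp_zero (q : ℕ) : redExp q 0 = 0 := by simp [redExp]

lemma redExp_le (q e : ℕ) : redExp q e ≤ e := by
  unfold redExp; split
  · omega
  · have := Nat.mod_le (e - 1) (q - 1); omega

lemma redExp_le_card {q : ℕ} (hq : 1 < q) (e : ℕ) : redExp q e ≤ q - 1 := by
  unfold redExp; split
  · omega
  · have := Nat.mod_lt (e - 1) (show 0 < q - 1 by omega); omega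

lemma pow_redExp {K : Type*} [Field K] [Fintype K] (x : K) (e : ℕ) :
    x ^ redExp (Fintype.card K) e = x ^ e := by
  unfold redExp; split
  · rename_i he; subst he; rfl
  · rename_i he
    rcases eq_or_ne x 0 with rfl | hx
    · rw [zero_pow (by omega), zero_pow he]
    · have h1 : x ^ (e - 1) = x ^ ((e - 1) % (Fintype.card K - 1)) := by
        conv_lhs => rw [← Nat.div_add_mod (e - 1) (Fintype.card K - 1)]
        rw [pow_add, pow_mul, FiniteField.pow_card_sub_one_eq_one x hx, one_pow, one_mul]
      calc x ^ ((e - 1) % (Fintype.card K - 1) + 1) = x ^ (e - 1) * x := by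
            rw [pow_succ, h1]
        _ = x ^ e := by rw [← pow_succ]; congr 1; omega

/-- Reduction of an exponent vector. -/
noncomputable def redFinsupp (q : ℕ) {σ : Type*} (s : σ →₀ ℕ) : σ →₀ ℕ :=
  Finsupp.mapRange (redExp q) (redExp_zero q) s

/-- Reduction of a polynomial: each monomial's exponents are reduced. -/
noncomputable def redPoly (q : ℕ) {σ : Type*} {K : Type*} [CommSemiring K]
    (p : MvPolynomial σ K) : MvPolynomial σ K :=
  ∑ s ∈ p.support, monomial (redFinsupp q s) (coeff s p)

lemma support_redPoly_subset {σ : Type*} [DecidableEq σ] {K : Type*} [CommSemiring K]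
    (q : ℕ) (p : MvPolynomial σ K) :
    (redPoly q p).support ⊆ p.support.image (redFinsupp q) := by
  refine support_sum.trans ?_
  intro t ht
  simp only [Finset.mem_biUnion] at ht
  obtain ⟨s, hs, ht⟩ := ht
  have := support_monomial_subset ht
  simp only [Finset.mem_singleton] at this
  exact Finset.mem_image.mpr ⟨s, hs, this.symm⟩

lemma eval_redPoly {K : Type*} [Field K] [Fintype K] {σ : Type*} [Fintype σ]
    (p : MvPolynomial σ K) (x : σ → K) :
    eval x (redPoly (Fintype.card K) p) = eval x p := by
  conv_rhs => rw [← support_sum_monomial_coeff p]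
  rw [redPoly, map_sum, map_sum]
  refine Finset.sum_congr rfl fun s _ => ?_
  rw [eval_monomial, eval_monomial,
    Finsupp.prod_fintype _ _ (fun i => pow_zero _),
    Finsupp.prod_fintype _ _ (fun i => pow_zero _)]
  congr 1
  refine Finset.prod_congr rfl fun v _ => ?_
  rw [redFinsupp, Finsupp.mapRange_apply, pow_redExp]

lemma eval_eq_zero_poly_eq_zero {σ : Type} [Fintype σ] {K : Type*} [Field K] [Fintype K]
    (p : MvPolynomial σ K) (h0 : ∀ v : σ → K, eval v p = 0)
    (hp : ∀ s ∈ p.support, ∀ i, s i ≤ Fintype.card K - 1) : p = 0 := by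
  classical
  have hinj : Function.Injective ((Equiv.ulift.symm : σ ≃ ULift σ) : σ → ULift σ) :=
    Equiv.injective _
  set p' := rename ((Equiv.ulift.symm : σ ≃ ULift σ) : σ → ULift σ) p with hp'
  have h0' : ∀ w : ULift σ → K, eval w p' = 0 := fun w => by
    rw [hp', eval_rename]; exact h0 _
  have hmem : p' ∈ restrictDegree (ULift σ) K (Fintype.card K - 1) := by
    rw [mem_restrictDegree]
    intro s hs i
    rw [hp', support_rename_of_injective hinj] at hs
    obtain ⟨t, ht, rfl⟩ := Finset.mem_image.mp hs
    rw [Finsupp.mapDomain_equiv_apply]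
    exact hp t ht _
  have hz := MvPolynomial.eq_zero_of_eval_eq_zero (ULift σ) K p' h0' hmem
  apply rename_injective _ hinj
  rw [map_zero, ← hp']
  exact hz

/-- Degree bound for partial sum polynomials: let `P₁,…,P_m` be polynomials of
degree at most `d` in `n = a + β` variables over `F_q`, let `G` be the reduction
of the indicator polynomial `∏ i, (1 - P i ^ (q-1))` with all individual degrees
at most `q - 1` (which agrees with it on all points of `F_q^n`).  Then the
partial sum polynomial `Z_β(Y) = ∑_{z ∈ F_q^β} G(Y, z)` has total degree at most
`(min (m d) n - β)(q - 1)`. -/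
theorem partial_sum_degree_bound (K : Type*) [Field K] [Fintype K]
    (a β m d : ℕ) (P : Fin m → MvPolynomial (Fin a ⊕ Fin β) K)
    (hdeg : ∀ i, (P i).totalDegree ≤ d)
    (G : MvPolynomial (Fin a ⊕ Fin β) K)
    (hGred : ∀ v, G.degreeOf v ≤ Fintype.card K - 1)
    (hG : ∀ x : Fin a ⊕ Fin β → K,
      eval x G = eval x (∏ i, (1 - P i ^ (Fintype.card K - 1)))) :
    (∑ z : Fin β → K,
        aeval (Sum.elim X (fun j => C (z j))) G : MvPolynomial (Fin a) K).totalDegree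
      ≤ (min (m * d) (a + β) - β) * (Fintype.card K - 1) := by
  classical
  set q := Fintype.card K with hq
  have hq1 : 1 < q := Fintype.one_lt_card
  set F : MvPolynomial (Fin a ⊕ Fin β) K := ∏ i, (1 - P i ^ (q - 1)) with hF
  -- individual degrees of monomials of G
  have hsupG : ∀ s ∈ G.support, ∀ i, s i ≤ q - 1 := by
    intro s hs i
    calc s i ≤ G.degreeOf i := by
          rw [degreeOf_eq_sup]; exact Finset.le_sup (f := fun m => m i) hs
      _ ≤ q - 1 := hGred i
  have hsupR : ∀ s ∈ (redPoly q F).support, ∀ i, s i ≤ q - 1 := by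
    intro s hs i
    obtain ⟨t, ht, rfl⟩ := Finset.mem_image.mp (support_redPoly_subset q F hs)
    rw [redFinsupp, Finsupp.mapRange_apply]
    exact redExp_le_card hq1 _
  -- G is the reduction of F
  have hGF : G = redPoly q F := by
    have h0 : ∀ v, eval v (G - redPoly q F) = 0 := by
      intro v
      rw [map_sub, eval_redPoly, hG v, sub_self]
    have hmem : G - redPoly q F ∈ restrictDegree (Fin a ⊕ Fin β) K (q - 1) :=
      sub_mem ((mem_restrictDegree _ _ _).mpr hsupG) ((mem_restrictDegree _ _ _).mpr hsupR)
    have := eval_eq_zero_poly_eq_zero (G - redPoly q F) h0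
      ((mem_restrictDegree _ _ _).mp hmem)
    exact sub_eq_zero.mp this
  -- degree bounds on G
  have hdegF : F.totalDegree ≤ m * d * (q - 1) := by
    calc F.totalDegree ≤ ∑ i : Fin m, (1 - P i ^ (q - 1)).totalDegree :=
          totalDegree_finset_prod _ _
      _ ≤ ∑ _i : Fin m, d * (q - 1) := by
          refine Finset.sum_le_sum fun i _ => ?_
          refine (totalDegree_sub _ _).trans (sup_le (by simp) ?_)
          refine (totalDegree_pow _ _).trans ?_
          calc (q - 1) * (P i).totalDegree ≤ (q - 1) * d :=
                Nat.mul_le_mul_left _ (hdeg i)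
            _ = d * (q - 1) := mul_comm _ _
      _ = m * d * (q - 1) := by
          rw [Finset.sum_const, Finset.card_univ, Fintype.card_fin, smul_eq_mul, mul_assoc]
  have hdegR : (redPoly q F).totalDegree ≤ F.totalDegree := by
    rw [totalDegree]
    apply Finset.sup_le
    intro t ht
    obtain ⟨s, hs, rfl⟩ := Finset.mem_image.mp (support_redPoly_subset q F ht)
    have h1 : ((redFinsupp q s).sum fun _ e => e) ≤ s.sum fun _ e => e := by
      rw [Finsupp.sum_fintype _ _ (fun _ => rfl), Finsupp.sum_fintype _ _ (fun _ => rfl)]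
      refine Finset.sum_le_sum fun v _ => ?_
      rw [redFinsupp, Finsupp.mapRange_apply]
      exact redExp_le _ _
    exact h1.trans (le_totalDegree hs)
  have hdegG : G.totalDegree ≤ min (m * d) (a + β) * (q - 1) := by
    have h1 : G.totalDegree ≤ m * d * (q - 1) := hGF ▸ hdegR.trans hdegF
    have h2 : G.totalDegree ≤ (a + β) * (q - 1) := by
      rw [totalDegree]
      apply Finset.sup_le
      intro s hs
      rw [Finsupp.sum_fintype _ _ (fun _ => rfl)]
      calc ∑ v, s v ≤ ∑ _v : Fin a ⊕ Fin β, (q - 1) :=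
            Finset.sum_le_sum fun v _ => hsupG s hs v
        _ = (a + β) * (q - 1) := by
            simp [Finset.sum_const, Finset.card_univ, mul_comm]
    rcases le_total (m * d) (a + β) with h | h
    · rw [min_eq_left h]; exact h1
    · rw [min_eq_right h]; exact h2
  -- rewrite the partial sum
  have hsum : ∀ e : Fin β → ℕ,
      ∑ z : Fin β → K, ∏ j, (z j) ^ e j = ∏ j, ∑ t : K, t ^ e j := by
    intro e
    rw [Finset.prod_univ_sum, Fintype.piFinset_univ]
  have hrw : (∑ z : Fin β → K,
        aeval (Sum.elim X (fun j => C (z j))) G : MvPolynomial (Fin a) K)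
      = ∑ s ∈ G.support, C (coeff s G * ∏ j : Fin β, ∑ t : K, t ^ s (Sum.inr j)) *
          ∏ i : Fin a, X i ^ s (Sum.inl i) := by
    have hz : ∀ z : Fin β → K, (aeval (Sum.elim X fun j => C (z j)) G : MvPolynomial (Fin a) K)
        = ∑ s ∈ G.support, C (coeff s G * ∏ j : Fin β, (z j) ^ s (Sum.inr j)) *
            ∏ i : Fin a, X i ^ s (Sum.inl i) := by
      intro z
      conv_lhs => rw [← support_sum_monomial_coeff G, map_sum]
      refine Finset.sum_congr rfl fun s _ => ?_
      rw [aeval_monomial, Finsupp.prod_fintype _ _ (fun _ => pow_zero _),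
        Fintype.prod_sum_type]
      simp only [Sum.elim_inl, Sum.elim_inr, ← C_pow, ← map_prod, algebraMap_eq]
      rw [C_mul]
      ring
    rw [Finset.sum_congr rfl fun z _ => hz z, Finset.sum_comm]
    refine Finset.sum_congr rfl fun s _ => ?_
    rw [← Finset.sum_mul, ← map_sum, ← Finset.mul_sum, hsum fun j => s (Sum.inr j)]
  rw [hrw]
  refine (totalDegree_finset_sum _ _).trans (Finset.sup_le fun s hs => ?_)
  by_cases hall : ∀ j : Fin β, s (Sum.inr j) = q - 1
  · refine (totalDegree_mul _ _).trans ?_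
    rw [totalDegree_C, zero_add]
    refine (totalDegree_finset_prod _ _).trans ?_
    have h1 : ∑ i : Fin a, (X i ^ s (Sum.inl i) : MvPolynomial (Fin a) K).totalDegree
        = ∑ i : Fin a, s (Sum.inl i) :=
      Finset.sum_congr rfl fun i _ => totalDegree_X_pow _ _
    rw [h1]
    have hsum_s : (∑ i : Fin a, s (Sum.inl i)) + β * (q - 1)
        ≤ min (m * d) (a + β) * (q - 1) := by
      have h2 : (∑ i : Fin a, s (Sum.inl i)) + ∑ j : Fin β, s (Sum.inr j)
          ≤ min (m * d) (a + β) * (q - 1) := by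
        rw [← Fintype.sum_sum_type]
        calc ∑ v : Fin a ⊕ Fin β, s v = s.sum fun _ e => e :=
              (Finsupp.sum_fintype s (fun _ e => e) (fun _ => rfl)).symm
          _ ≤ G.totalDegree := le_totalDegree hs
          _ ≤ _ := hdegG
      simpa [hall, Finset.sum_const, Finset.card_univ, mul_comm] using h2
    rw [Nat.sub_mul]
    exact Nat.le_sub_of_add_le hsum_s
  · push_neg at hall
    obtain ⟨j, hj⟩ := hall
    have hlt : s (Sum.inr j) < q - 1 := lt_of_le_of_ne (hsupG s hs _) hj
    have h0 : (∑ t : K, t ^ s (Sum.inr j)) = 0 :=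
      FiniteField.sum_pow_lt_card_sub_one K _ hlt
    rw [Finset.prod_eq_zero (Finset.mem_univ j) h0, mul_zero, map_zero, zero_mul]
    simp
end

section
/- Error probability per evaluation point after Razborov–Smolensky with β+2 combinations: Let q be a prime power, P₁,…,P_m ∈ F_q[X₁,…,X_n], and fix y ∈ F_q^{n-β}. Let P̃₁,…,P̃_{β+2} be independent uniform random F_q-linear combinations of P₁,…,P_m, let F_j := ∏_{i=1}^{β+2}(1 - P̃_i^{q-1}), F := ∏_{i=1}^m (1 - P_i^{q-1}), and define Z_{β,j}(y) := ∑_{z ∈ F_q^β} F_j(y,z) and Z_β(y) := ∑_{z ∈ F_q^β} F(y,z). Then Pr[Z_{β,j}(y) ≠ Z_β(y)] ≤ q^{-2}. -/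
/-!
By Fermat's little theorem `∏ i, (1 - c i ^ (q - 1))` is the indicator of `c = 0`. Hence at a
point `z`, with `c = (P i (y, z))ᵢ`, the two products can only differ when `c ≠ 0` and each of the
`β + 2` independent random vectors `ρ j` lies in the hyperplane `c^⊥`, which has `q^(m-1)`
elements; this happens for a fraction `q^-(β+2)` of the `ρ`. A union bound over the `q^β`
points `z` gives `q^-2`.
-/

open MvPolynomial Finset

theorem card_filter_sum_ne_sum_le {α Z M : Type*} [Fintype Z] [AddCommMonoid M] [DecidableEq M]
    (s : Finset α) (f : α → Z → M) (g : Z → M) :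
    #{ρ ∈ s | ∑ z, f ρ z ≠ ∑ z, g z} ≤ ∑ z, #{ρ ∈ s | f ρ z ≠ g z} := by
  classical
  calc _ ≤ #(univ.biUnion fun z => {ρ ∈ s | f ρ z ≠ g z}) := by
        refine card_le_card fun ρ hρ => ?_
        simp only [mem_filter, mem_biUnion, mem_univ, true_and] at hρ ⊢
        by_contra! h
        exact hρ.2 (sum_congr rfl fun z _ => h z hρ.1)
    _ ≤ _ := card_biUnion_le

section

variable {K : Type*} [Field K] [Fintype K] [DecidableEq K]

theorem FiniteField.one_sub_pow_card_sub_one_eq_ite (x : K) :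
    1 - x ^ (Fintype.card K - 1) = if x = 0 then 1 else 0 := by
  split_ifs with hx
  · rw [hx, zero_pow (Nat.sub_ne_zero_of_lt Fintype.one_lt_card), sub_zero]
  · rw [FiniteField.pow_card_sub_one_eq_one x hx, sub_self]

theorem FiniteField.prod_one_sub_pow_card_sub_one_eq_ite {ι : Type*} [Fintype ι] (c : ι → K) :
    ∏ i, (1 - c i ^ (Fintype.card K - 1)) = if c = 0 then 1 else 0 := by
  simp_rw [FiniteField.one_sub_pow_card_sub_one_eq_ite, Fintype.prod_boole, funext_iff,
    Pi.zero_apply]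

theorem card_filter_dotProduct_eq_zero_mul_card {ι : Type*} [Fintype ι]
    [DecidableEq ι] {c : ι → K} (hc : c ≠ 0) :
    #{v : ι → K | v ⬝ᵥ c = 0} * Fintype.card K = Fintype.card K ^ Fintype.card ι := by
  let f : (ι → K) →+ K := AddMonoidHom.mk' (· ⬝ᵥ c) fun v w => add_dotProduct v w c
  have hf : Function.Surjective f := by
    obtain ⟨i, hi⟩ := Function.ne_iff.mp hc
    intro t
    exact ⟨Pi.single i (t / c i), by simp [f, div_mul_cancel₀ t hi]⟩
  have := f.ker.card_mul_index
  rw [AddSubgroup.index_ker, AddMonoidHom.range_eq_top.mpr hf] at this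
  simpa [Nat.card_eq_fintype_card, Fintype.card_subtype, f] using this

theorem card_filter_prod_dotProduct_ne_prod_mul_le {ι : Type*} [Fintype ι]
    [DecidableEq ι] (c : ι → K) (k : ℕ) :
    #{ρ : Fin k → ι → K | ∏ j, (1 - (ρ j ⬝ᵥ c) ^ (Fintype.card K - 1))
        ≠ ∏ i, (1 - c i ^ (Fintype.card K - 1))} * Fintype.card K ^ k
      ≤ Fintype.card K ^ (k * Fintype.card ι) := by
  simp_rw [FiniteField.prod_one_sub_pow_card_sub_one_eq_ite]
  by_cases hc : c = 0
  · simp [hc, funext_iff]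
  calc _ ≤ #(Fintype.piFinset fun _ : Fin k => {v : ι → K | v ⬝ᵥ c = 0})
          * Fintype.card K ^ k := by
        gcongr
        intro ρ hρ
        simpa [hc, funext_iff, Fintype.mem_piFinset] using hρ
    _ = Fintype.card K ^ (k * Fintype.card ι) := by
        rw [Fintype.card_piFinset_const, ← mul_pow, card_filter_dotProduct_eq_zero_mul_card hc,
          ← pow_mul, mul_comm]

end

/-- Error probability per evaluation point after Razborov–Smolensky with `β + 2`
random linear combinations: fix `y ∈ F_q^{n-β}`.  Over uniformly random
coefficients `ρ : Fin (β+2) → Fin m → F_q`, the probability that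
`∑_{z ∈ F_q^β} F_ρ(y,z) ≠ ∑_{z ∈ F_q^β} F(y,z)` is at most `q^{-2}`, where
`F_ρ = ∏_{j<β+2} (1 - (∑ i, ρ j i • P i)^{q-1})` and
`F = ∏_i (1 - P i^{q-1})`.  Stated as a counting inequality:
`#bad · q² ≤ q^{(β+2)m}`. -/
theorem razborov_smolensky_partial_sum_error (K : Type*) [Field K] [Fintype K]
    [DecidableEq K] (a β m : ℕ)
    (P : Fin m → MvPolynomial (Fin a ⊕ Fin β) K) (y : Fin a → K) :
    ((univ : Finset (Fin (β + 2) → Fin m → K)).filter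
        (fun ρ =>
          (∑ z : Fin β → K, eval (Sum.elim y z)
              (∏ j : Fin (β + 2),
                (1 - (∑ i, C (ρ j i) * P i) ^ (Fintype.card K - 1))))
          ≠ ∑ z : Fin β → K, eval (Sum.elim y z)
              (∏ i, (1 - P i ^ (Fintype.card K - 1))))).card
        * Fintype.card K ^ 2
      ≤ Fintype.card K ^ ((β + 2) * m) := by
  set q := Fintype.card K
  let c (z : Fin β → K) (i : Fin m) : K := eval (Sum.elim y z) (P i)
  have hpoint (z : Fin β → K) :
      #{ρ : Fin (β + 2) → Fin m → K |
          eval (Sum.elim y z) (∏ j, (1 - (∑ i, C (ρ j i) * P i) ^ (q - 1)))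
            ≠ eval (Sum.elim y z) (∏ i, (1 - P i ^ (q - 1)))} * q ^ (β + 2)
        ≤ q ^ ((β + 2) * m) := by
    simpa [dotProduct, c] using card_filter_prod_dotProduct_ne_prod_mul_le (c z) (β + 2)
  refine Nat.le_of_mul_le_mul_right ?_ (pow_pos (Fintype.card_pos (α := K)) β)
  calc _ = _ * q ^ (β + 2) := by rw [mul_assoc, ← pow_add, add_comm]
    _ ≤ _ * q ^ (β + 2) := Nat.mul_le_mul_right _ (card_filter_sum_ne_sum_le _ _ _)
    _ = _ := sum_mul _ _ _
    _ ≤ ∑ _z : Fin β → K, q ^ ((β + 2) * m) := sum_le_sum fun z _ => hpoint z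
    _ = _ := by simp [q, mul_comm]
end

section
/- Uniqueness of interpolation from degree-bounded evaluation points: Let q be a prime power and let P, Q ∈ F_q[X₁,…,X_n] be polynomials of total degree at most Δ with individual degrees at most q-1 in each variable. If P(x) = Q(x) for all x ∈ F_q^n with ∑_{i=1}^n x̂_i ≤ Δ (where x̂_i ∈ {0,…,q-1} is the canonical integer representative of x_i), then P = Q. -/
open MvPolynomial Finset

private lemma trimmed_interpolation_key (K : Type*) [Field K] [Fintype K]
    (e : K ≃ Fin (Fintype.card K)) :
    ∀ (n Δ : ℕ) (R : MvPolynomial (Fin n) K),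
      R.totalDegree ≤ Δ → (∀ v, R.degreeOf v ≤ Fintype.card K - 1) →
      (∀ x : Fin n → K, (∑ i, ((e (x i) : ℕ))) ≤ Δ → eval x R = 0) → R = 0 := by
  intro n
  induction n with
  | zero =>
    intro Δ R _ _ hz
    have h := hz (fun _ => 0) (by simp)
    rw [eq_C_of_isEmpty R] at h ⊢
    rw [eval_C] at h
    rw [h, map_zero]
  | succ n ih =>
    intro Δ R hdeg hind hz
    set F := finSuccEquiv K n R with hF
    have hq : 1 ≤ Fintype.card K := Fintype.card_pos
    have hcoeff : ∀ m k, Fintype.card K ≤ k + m → F.coeff k = 0 := by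
      intro m
      induction m with
      | zero =>
        intro k hk
        apply Polynomial.coeff_eq_zero_of_natDegree_lt
        rw [hF, natDegree_finSuccEquiv]
        have := hind 0
        omega
      | succ m ihm =>
        intro k hk
        rcases le_or_gt (Fintype.card K) (k + m) with h | h
        · exact ihm k h
        have hk1 : k + 1 ≤ Fintype.card K := by omega
        by_cases hF0 : F.coeff k = 0
        · exact hF0
        have hkΔ : (F.coeff k).totalDegree + k ≤ Δ :=
          le_trans (totalDegree_coeff_finSuccEquiv_add_le R k hF0) hdeg
        exfalso; apply hF0
        apply ih (Δ - k)
        · omega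
        · intro v
          exact le_trans (degreeOf_coeff_finSuccEquiv R v k) (hind v.succ)
        · intro x hx
          set g := Polynomial.map (eval x) F with hg
          have hgcoeff : ∀ j, k < j → g.coeff j = 0 := by
            intro j hj
            rw [hg, Polynomial.coeff_map, ihm j (by omega), map_zero]
          have hgdeg : g.natDegree ≤ k := Polynomial.natDegree_le_iff_coeff_eq_zero.mpr hgcoeff
          have hg0 : g = 0 := by
            apply Polynomial.eq_zero_of_natDegree_lt_card_of_eval_eq_zero g
              (f := fun t : Fin (k + 1) => e.symm ⟨(t : ℕ), lt_of_lt_of_le t.isLt hk1⟩)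
            · intro t1 t2 ht
              have := e.symm.injective ht
              have h2 : (t1 : ℕ) = (t2 : ℕ) := by simpa using this
              exact Fin.ext h2
            · intro t
              have heval : Polynomial.eval ((e.symm ⟨(t : ℕ), lt_of_lt_of_le t.isLt hk1⟩)) g
                  = eval (Fin.cons (e.symm ⟨(t : ℕ), lt_of_lt_of_le t.isLt hk1⟩) x) R := by
                rw [hg, hF, ← eval_eq_eval_mv_eval']
              rw [heval]
              apply hz
              rw [Fin.sum_univ_succ]
              simp only [Fin.cons_zero, Fin.cons_succ]
              have : ((e (e.symm ⟨(t : ℕ), lt_of_lt_of_le t.isLt hk1⟩)) : ℕ) = (t : ℕ) := by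
                rw [Equiv.apply_symm_apply]
              rw [this]
              have ht : (t : ℕ) ≤ k := by omega
              omega
            · rw [Fintype.card_fin]; omega
          have : g.coeff k = 0 := by rw [hg0, Polynomial.coeff_zero]
          rwa [hg, Polynomial.coeff_map] at this
    have hFzero : F = 0 := by
      ext k
      rw [hcoeff (Fintype.card K) k (by omega), Polynomial.coeff_zero]
    have := (finSuccEquiv K n).injective (a₁ := R) (a₂ := 0)
    apply this
    rw [map_zero, ← hF, hFzero]

/-- Uniqueness of interpolation from degree-bounded evaluation points: fix an
enumeration `e : F_q ≃ Fin q` of the field elements.  If `P, Q` have total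
degree at most `Δ`, individual degrees at most `q - 1`, and agree on all points
`x ∈ F_q^n` whose integer representatives sum to at most `Δ`, then `P = Q`. -/
theorem trimmed_interpolation_unique (K : Type*) [Field K] [Fintype K]
    (e : K ≃ Fin (Fintype.card K)) (n Δ : ℕ)
    (P Q : MvPolynomial (Fin n) K)
    (hPdeg : P.totalDegree ≤ Δ) (hQdeg : Q.totalDegree ≤ Δ)
    (hPind : ∀ v, P.degreeOf v ≤ Fintype.card K - 1)
    (hQind : ∀ v, Q.degreeOf v ≤ Fintype.card K - 1)
    (heq : ∀ x : Fin n → K, (∑ i, ((e (x i) : ℕ))) ≤ Δ → eval x P = eval x Q) :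
    P = Q := by
  have h := trimmed_interpolation_key K e n Δ (P - Q)
    (le_trans (totalDegree_sub P Q) (max_le hPdeg hQdeg))
    (fun v => le_trans (degreeOf_sub_le v P Q) (max_le (hPind v) (hQind v)))
    (fun x hx => by rw [map_sub, heq x hx, sub_self])
  exact sub_eq_zero.mp h
end
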